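/- arXiv:2309.02287 — 2 statements merged into one kernel-verified Lean document; each statement's English description precedes it below -/
import Mathlib

section
/- For jointly Gaussian random vectors, the information gain I(S; μ) = H(S) − H(S | μ) is submodular as a function of the finite index set S of observed coordinates: for S ⊆ T and any coordinate o ∉ T, I(S ∪ {o}; μ) − I(S; μ) ≥ I(T ∪ {o}; μ) − I(T; μ). Specialize to the case where observations are y_i = f(x_i) + ε_i with f ∼ GP prior and independent Gaussian noise ε_i ∼ N(0, σ²): then I(S; f) = ½ log det(I + σ⁻² K_S) where K_S is the kernel matrix on S, and submodularity reduces to: for S ⊆ T and a point o, log det(I + σ⁻²K_{S∪{o}}) − log det(I + σ⁻²K_S) ≥ log det(I + σ⁻²K_{T∪{o}}) − log det(I + σ⁻²K_T). -/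
/-- Gaussian-process information gain `I(S; f) = ½ log det(I + σ⁻² K_S)` where `K_S` is
the principal submatrix of the kernel matrix `K` indexed by `S`. -/
noncomputable def gpInfoGain {n : ℕ} (K : Matrix (Fin n) (Fin n) ℝ) (σ : ℝ)
    (S : Finset (Fin n)) : ℝ :=
  (1 / 2) * Real.log (Matrix.det
    (1 + (σ ^ 2)⁻¹ • K.submatrix (fun i : {x // x ∈ S} => (i : Fin n))
        (fun i : {x // x ∈ S} => (i : Fin n))))

section Aux

open Matrix Finset

variable {n : ℕ}

/-- principal submatrix on a finset -/
noncomputable def smx (M : Matrix (Fin n) (Fin n) ℝ) (S : Finset (Fin n)) :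
    Matrix {x // x ∈ S} {x // x ∈ S} ℝ :=
  M.submatrix (fun i : {x // x ∈ S} => (i : Fin n)) (fun i : {x // x ∈ S} => (i : Fin n))

/-- extend a vector on S by zero -/
noncomputable def extv (S : Finset (Fin n)) (v : {x // x ∈ S} → ℝ) : Fin n → ℝ :=
  fun i => if h : i ∈ S then v ⟨i, h⟩ else 0

lemma sum_extv (S : Finset (Fin n)) (v : {x // x ∈ S} → ℝ) (g : Fin n → ℝ) :
    ∑ i, extv S v i * g i = ∑ i : {x // x ∈ S}, v i * g ↑i := by
  rw [← Finset.sum_subset (Finset.subset_univ S)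
    (fun x _ hx => by simp [extv, hx])]
  rw [← Finset.sum_attach S (fun i => extv S v i * g i)]
  apply Finset.sum_congr rfl
  intro i _
  simp [extv, i.2]

lemma dot_extv (M : Matrix (Fin n) (Fin n) ℝ) (S : Finset (Fin n))
    (v w : {x // x ∈ S} → ℝ) :
    extv S v ⬝ᵥ M *ᵥ extv S w = v ⬝ᵥ smx M S *ᵥ w := by
  unfold dotProduct
  rw [sum_extv]
  apply Finset.sum_congr rfl
  intro i _
  congr 1
  unfold mulVec dotProduct
  calc ∑ j, M ↑i j * extv S w j = ∑ j, extv S w j * M ↑i j := by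
        simp [mul_comm]
    _ = ∑ j : {x // x ∈ S}, w j * M ↑i ↑j := sum_extv S w _
    _ = ∑ j : {x // x ∈ S}, smx M S i j * w j := by simp [smx, mul_comm]

lemma smx_posDef {M : Matrix (Fin n) (Fin n) ℝ} (hM : M.PosDef) (S : Finset (Fin n)) :
    (smx M S).PosDef := by
  refine Matrix.PosDef.of_dotProduct_mulVec_pos ?_ ?_
  · have h := hM.1
    ext i j
    simpa [smx, Matrix.IsHermitian] using congrFun (congrFun h ↑i) ↑j
  · intro v hv
    have h1 : extv S v ≠ 0 := by
      obtain ⟨i, hi⟩ := Function.ne_iff.mp hv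
      refine Function.ne_iff.mpr ⟨↑i, ?_⟩
      simpa [extv, i.2] using hi
    have := hM.dotProduct_mulVec_pos h1
    simpa [dot_extv M S v v] using this

/-- column of M at o restricted to S -/
noncomputable def colv (M : Matrix (Fin n) (Fin n) ℝ) (S : Finset (Fin n)) (o : Fin n) :
    {x // x ∈ S} → ℝ := fun i => M ↑i o

noncomputable def schurc (M : Matrix (Fin n) (Fin n) ℝ) (S : Finset (Fin n)) (o : Fin n) : ℝ :=
  M o o - colv M S o ⬝ᵥ (smx M S)⁻¹ *ᵥ colv M S o

lemma expand_quad {M : Matrix (Fin n) (Fin n) ℝ} (hM : M.PosDef) (S : Finset (Fin n))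
    (o : Fin n) (w : {x // x ∈ S} → ℝ) :
    (Pi.single o 1 - extv S w) ⬝ᵥ M *ᵥ (Pi.single o 1 - extv S w)
      = M o o - 2 * (w ⬝ᵥ colv M S o) + w ⬝ᵥ smx M S *ᵥ w := by
  have hsymm : ∀ i j, M i j = M j i := fun i j => by
    simpa [Matrix.IsHermitian] using congrFun (congrFun hM.1 j) i
  have h1 : (Pi.single o 1 : Fin n → ℝ) ⬝ᵥ M *ᵥ Pi.single o 1 = M o o := by
    simp [single_dotProduct, Matrix.mulVec_single]
  have h2 : (Pi.single o 1 : Fin n → ℝ) ⬝ᵥ M *ᵥ extv S w = w ⬝ᵥ colv M S o := by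
    rw [single_dotProduct, one_mul]
    show (M *ᵥ extv S w) o = _
    unfold mulVec dotProduct
    calc ∑ j, M o j * extv S w j = ∑ j, extv S w j * M o j := by simp [mul_comm]
      _ = ∑ j : {x // x ∈ S}, w j * M o ↑j := sum_extv S w _
      _ = ∑ j : {x // x ∈ S}, w j * colv M S o j := by
          simp only [colv]; exact Finset.sum_congr rfl fun j _ => by rw [hsymm o ↑j]
  have h3 : extv S w ⬝ᵥ M *ᵥ Pi.single o 1 = w ⬝ᵥ colv M S o := by
    unfold dotProduct
    rw [sum_extv]
    apply Finset.sum_congr rfl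
    intro i _
    simp [Matrix.mulVec_single, colv]
  have h4 := dot_extv M S w w
  rw [sub_dotProduct, Matrix.mulVec_sub, dotProduct_sub,
    dotProduct_sub, h1, h2, h3, h4]
  ring

lemma schurc_eq_quad {M : Matrix (Fin n) (Fin n) ℝ} (hM : M.PosDef) (S : Finset (Fin n))
    (o : Fin n) :
    (Pi.single o 1 - extv S ((smx M S)⁻¹ *ᵥ colv M S o)) ⬝ᵥ
        M *ᵥ (Pi.single o 1 - extv S ((smx M S)⁻¹ *ᵥ colv M S o)) = schurc M S o := by
  set A := smx M S with hA
  set c := colv M S o with hc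
  have hdet : IsUnit A.det := ((smx_posDef hM S).det_pos).ne'.isUnit
  have hAinv : A *ᵥ (A⁻¹ *ᵥ c) = c := by
    rw [Matrix.mulVec_mulVec, Matrix.mul_nonsing_inv _ hdet, Matrix.one_mulVec]
  rw [expand_quad hM]
  have h1 : (A⁻¹ *ᵥ c) ⬝ᵥ c = c ⬝ᵥ A⁻¹ *ᵥ c := dotProduct_comm _ _
  have h2 : (A⁻¹ *ᵥ c) ⬝ᵥ A *ᵥ (A⁻¹ *ᵥ c) = c ⬝ᵥ A⁻¹ *ᵥ c := by
    rw [hAinv, dotProduct_comm]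
  rw [← hc, ← hA, h1, h2, schurc, ← hA, ← hc]
  ring

lemma quad_ge_schurc {M : Matrix (Fin n) (Fin n) ℝ} (hM : M.PosDef) (S : Finset (Fin n))
    (o : Fin n) (w : {x // x ∈ S} → ℝ) :
    schurc M S o ≤
      (Pi.single o 1 - extv S w) ⬝ᵥ M *ᵥ (Pi.single o 1 - extv S w) := by
  set A := smx M S with hA
  set c := colv M S o with hc
  have hdet : IsUnit A.det := ((smx_posDef hM S).det_pos).ne'.isUnit
  have hAinv : A *ᵥ (A⁻¹ *ᵥ c) = c := by
    rw [Matrix.mulVec_mulVec, Matrix.mul_nonsing_inv _ hdet, Matrix.one_mulVec]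
  have hAsymm : Aᵀ = A := by
    have := (smx_posDef hM S).1
    simpa [Matrix.IsHermitian] using this
  set u := w - A⁻¹ *ᵥ c with hu
  have key : u ⬝ᵥ A *ᵥ u
      = w ⬝ᵥ A *ᵥ w - 2 * (w ⬝ᵥ c) + c ⬝ᵥ A⁻¹ *ᵥ c := by
    have e1 : w ⬝ᵥ A *ᵥ (A⁻¹ *ᵥ c) = w ⬝ᵥ c := by rw [hAinv]
    have e2 : (A⁻¹ *ᵥ c) ⬝ᵥ A *ᵥ w = w ⬝ᵥ c := by
      rw [Matrix.dotProduct_mulVec, ← Matrix.mulVec_transpose, hAsymm, hAinv,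
        dotProduct_comm]
    have e3 : (A⁻¹ *ᵥ c) ⬝ᵥ A *ᵥ (A⁻¹ *ᵥ c) = c ⬝ᵥ A⁻¹ *ᵥ c := by
      rw [hAinv, dotProduct_comm]
    rw [hu, sub_dotProduct, Matrix.mulVec_sub, dotProduct_sub,
      dotProduct_sub, e1, e2, e3]
    ring
  have hpos : 0 ≤ u ⬝ᵥ A *ᵥ u := by
    rcases eq_or_ne u 0 with h | h
    · simp [h]
    · exact le_of_lt (by simpa using (smx_posDef hM S).dotProduct_mulVec_pos h)
  rw [expand_quad hM, schurc, ← hA, ← hc]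
  nlinarith [key, hpos]

lemma schurc_pos {M : Matrix (Fin n) (Fin n) ℝ} (hM : M.PosDef) {S : Finset (Fin n)}
    {o : Fin n} (ho : o ∉ S) : 0 < schurc M S o := by
  rw [← schurc_eq_quad hM S o]
  set z := Pi.single o 1 - extv S ((smx M S)⁻¹ *ᵥ colv M S o) with hz
  have hz0 : z ≠ 0 := by
    refine Function.ne_iff.mpr ⟨o, ?_⟩
    simp [hz, extv, ho]
  simpa using hM.dotProduct_mulVec_pos hz0

lemma schurc_mono {M : Matrix (Fin n) (Fin n) ℝ} (hM : M.PosDef) {S T : Finset (Fin n)}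
    (hST : S ⊆ T) (o : Fin n) : schurc M T o ≤ schurc M S o := by
  set w := (smx M S)⁻¹ *ᵥ colv M S o with hw
  set w' : {x // x ∈ T} → ℝ := fun i => if h : ↑i ∈ S then w ⟨↑i, h⟩ else 0 with hw'
  have hext : extv S w = extv T w' := by
    funext i
    by_cases hS : i ∈ S
    · have hT : i ∈ T := hST hS
      simp [extv, hS, hT, hw']
    · by_cases hT : i ∈ T <;> simp [extv, hS, hT, hw']
  calc schurc M T o
      ≤ (Pi.single o 1 - extv T w') ⬝ᵥ M *ᵥ (Pi.single o 1 - extv T w') :=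
        quad_ge_schurc hM T o w'
    _ = schurc M S o := by rw [← hext, schurc_eq_quad hM S o]

/-- equivalence splitting `insert o S` into `S ⊕ {o}` -/
noncomputable def insertEquiv (S : Finset (Fin n)) (o : Fin n) (ho : o ∉ S) :
    {x // x ∈ S} ⊕ Unit ≃ {x // x ∈ insert o S} where
  toFun := fun i => match i with
    | Sum.inl i => ⟨↑i, Finset.mem_insert_of_mem i.2⟩
    | Sum.inr _ => ⟨o, Finset.mem_insert_self o S⟩
  invFun := fun j => if h : ↑j ∈ S then Sum.inl ⟨↑j, h⟩ else Sum.inr ()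
  left_inv := by
    rintro (i | ⟨⟩)
    · simp [i.2]
    · simp [ho]
  right_inv := by
    rintro ⟨j, hj⟩
    rcases Finset.mem_insert.mp hj with h | h
    · subst h; simp [ho]
    · simp [h]

lemma det_smx_insert {M : Matrix (Fin n) (Fin n) ℝ} (hM : M.PosDef) {S : Finset (Fin n)}
    {o : Fin n} (ho : o ∉ S) :
    (smx M (insert o S)).det = (smx M S).det * schurc M S o := by
  set e := insertEquiv S o ho with he
  have h1 : (smx M (insert o S)).det = ((smx M (insert o S)).submatrix e e).det :=
    (Matrix.det_submatrix_equiv_self e _).symm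
  have h2 : (smx M (insert o S)).submatrix e e
      = Matrix.fromBlocks (smx M S)
          (Matrix.of fun (i : {x // x ∈ S}) (_ : Unit) => M ↑i o)
          (Matrix.of fun (_ : Unit) (j : {x // x ∈ S}) => M o ↑j)
          (Matrix.of fun (_ _ : Unit) => M o o) := by
    ext i j
    rcases i with i | ⟨⟩ <;> rcases j with j | ⟨⟩ <;>
      simp [smx, he, insertEquiv, Matrix.fromBlocks, Matrix.submatrix_apply]
  have hdet : IsUnit (smx M S).det := ((smx_posDef hM S).det_pos).ne'.isUnit
  have : Invertible (smx M S) := (smx M S).invertibleOfIsUnitDet hdet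
  rw [h1, h2, Matrix.det_fromBlocks₁₁]
  congr 1
  rw [Matrix.invOf_eq_nonsing_inv]
  rw [Matrix.det_unique]
  show M o o - ((Matrix.of fun (_ : Unit) (j : {x // x ∈ S}) => M o ↑j) * (smx M S)⁻¹ *
      (Matrix.of fun (i : {x // x ∈ S}) (_ : Unit) => M ↑i o)) default default = _
  have hsymm : ∀ i j, M i j = M j i := fun i j => by
    simpa [Matrix.IsHermitian] using congrFun (congrFun hM.1 j) i
  rw [schurc]
  congr 1
  simp only [Matrix.mul_apply, Matrix.of_apply, mulVec, dotProduct, colv,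
    Finset.mul_sum, Finset.sum_mul]
  rw [Finset.sum_comm]
  apply Finset.sum_congr rfl
  intro i _
  apply Finset.sum_congr rfl
  intro j _
  rw [hsymm o ↑i]
  ring

lemma one_submatrix_subtype (S : Finset (Fin n)) :
    (1 : Matrix (Fin n) (Fin n) ℝ).submatrix
        (fun i : {x // x ∈ S} => (i : Fin n)) (fun i : {x // x ∈ S} => (i : Fin n)) = 1 := by
  ext i j
  by_cases h : i = j
  · simp [h, Matrix.one_apply]
  · have h' : (i : Fin n) ≠ (j : Fin n) := fun hh => h (Subtype.ext hh)
    simp [Matrix.one_apply, h, h']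

lemma gp_eq (K : Matrix (Fin n) (Fin n) ℝ) (σ : ℝ) (S : Finset (Fin n)) :
    gpInfoGain K σ S = (1 / 2) * Real.log ((smx (1 + (σ ^ 2)⁻¹ • K) S).det) := by
  unfold gpInfoGain smx
  have h : (1 + (σ ^ 2)⁻¹ • K).submatrix
      (fun i : {x // x ∈ S} => (i : Fin n)) (fun i : {x // x ∈ S} => (i : Fin n))
      = 1 + (σ ^ 2)⁻¹ • K.submatrix
      (fun i : {x // x ∈ S} => (i : Fin n)) (fun i : {x // x ∈ S} => (i : Fin n)) := by
    have h1 := one_submatrix_subtype (n := n) S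
    ext i j
    rw [Matrix.submatrix_apply, Matrix.add_apply, Matrix.add_apply, Matrix.smul_apply,
      Matrix.smul_apply, Matrix.submatrix_apply]
    congr 1
    rw [← h1, Matrix.submatrix_apply]
  rw [h]

theorem gpInfoGain_submodular' {n : ℕ} (K : Matrix (Fin n) (Fin n) ℝ)
    (hK : K.PosSemidef) (σ : ℝ) (hσ : 0 < σ) :
    ∀ S T : Finset (Fin n), S ⊆ T → ∀ o ∉ T,
      gpInfoGain K σ (insert o S) - gpInfoGain K σ S ≥
        gpInfoGain K σ (insert o T) - gpInfoGain K σ T := by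
  intro S T hST o hoT
  have hoS : o ∉ S := fun h => hoT (hST h)
  set M := 1 + (σ ^ 2)⁻¹ • K with hMdef
  have hc : (0 : ℝ) ≤ (σ ^ 2)⁻¹ := by positivity
  have hKs : ((σ ^ 2)⁻¹ • K).PosSemidef := by
    refine Matrix.PosSemidef.of_dotProduct_mulVec_nonneg ?_ (fun x => ?_)
    · have := hK.1
      unfold Matrix.IsHermitian at this ⊢
      rw [Matrix.conjTranspose_smul, this]
      simp
    · rw [Matrix.smul_mulVec, dotProduct_smul]
      exact smul_nonneg hc (hK.dotProduct_mulVec_nonneg x)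
  have hM : M.PosDef := Matrix.PosDef.add_posSemidef Matrix.PosDef.one hKs
  have key : ∀ (U : Finset (Fin n)), o ∉ U →
      gpInfoGain K σ (insert o U) - gpInfoGain K σ U
        = (1 / 2) * Real.log (schurc M U o) := by
    intro U hoU
    rw [gp_eq, gp_eq, ← hMdef, det_smx_insert hM hoU,
      Real.log_mul ((smx_posDef hM U).det_pos.ne') (schurc_pos hM hoU).ne']
    ring
  rw [key S hoS, key T hoT]
  have h1 : Real.log (schurc M T o) ≤ Real.log (schurc M S o) :=
    Real.log_le_log (schurc_pos hM hoT) (schurc_mono hM hST o)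
  linarith

end Aux

/-- Submodularity of the Gaussian-process information gain: for `S ⊆ T` and `o ∉ T`,
`I(S ∪ {o}) − I(S) ≥ I(T ∪ {o}) − I(T)`. -/
theorem gpInfoGain_submodular {n : ℕ} (K : Matrix (Fin n) (Fin n) ℝ)
    (hK : K.PosSemidef) (σ : ℝ) (hσ : 0 < σ) :
    ∀ S T : Finset (Fin n), S ⊆ T → ∀ o ∉ T,
      gpInfoGain K σ (insert o S) - gpInfoGain K σ S ≥
        gpInfoGain K σ (insert o T) - gpInfoGain K σ T :=
  gpInfoGain_submodular' K hK σ hσ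
end

section
/- Let X, Z, Y be discrete random variables with joint distribution P satisfying the conditional independences (Z ⊥ X') and factorization implied by the front-door graph X → Z → Y with X ↔ Y confounded by a latent U: assume P(x, z, y) = Σ_u P(u) P(x|u) P(z|x) P(y|z,u) and P(z|x,u) = P(z|x). Then the interventional distribution P(Y | do(X = x)) := Σ_u P(u) Σ_z P(z|x) P(y|z,u) equals the front-door formula Σ_z P(z|x) Σ_{x'} P(y|x',z) P(x'). -/
/-- Front-door adjustment: in the SCM `X → Z → Y` with a latent confounder `U` between
`X` and `Y` (joint `P(x,z,y) = Σ_u P(u)P(x|u)P(z|x)P(y|z,u)`), the interventional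
distribution `P(y | do(X=x)) = Σ_u P(u) Σ_z P(z|x) P(y|z,u)` equals the front-door
formula `Σ_z P(z|x) Σ_{x'} P(y|x',z) P(x')`. -/
theorem front_door_adjustment {U X Z Y : Type*}
    [Fintype U] [Fintype X] [Fintype Z] [Fintype Y]
    (pU : U → ℝ) (pXgU : U → X → ℝ) (pZgX : X → Z → ℝ) (pYgZU : Z → U → Y → ℝ)
    (hU0 : ∀ u, 0 ≤ pU u) (hU1 : ∑ u, pU u = 1)
    (hX0 : ∀ u x, 0 ≤ pXgU u x) (hX1 : ∀ u, ∑ x, pXgU u x = 1)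
    (hZ0 : ∀ x z, 0 ≤ pZgX x z) (hZ1 : ∀ x, ∑ z, pZgX x z = 1)
    (hY0 : ∀ z u y, 0 ≤ pYgZU z u y) (hY1 : ∀ z u, ∑ y, pYgZU z u y = 1)
    (hpos : ∀ (x : X) (z : Z), 0 < ∑ u, pU u * pXgU u x * pZgX x z) :
    ∀ (x : X) (y : Y),
      (∑ u, pU u * ∑ z, pZgX x z * pYgZU z u y) =
        ∑ z, pZgX x z * ∑ x',
          ((∑ u, pU u * pXgU u x' * pZgX x' z * pYgZU z u y) /
              (∑ u, pU u * pXgU u x' * pZgX x' z)) *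
            (∑ u, pU u * pXgU u x') := by
  intro x y
  have key : ∀ (x' : X) (z : Z),
      ((∑ u, pU u * pXgU u x' * pZgX x' z * pYgZU z u y) /
          (∑ u, pU u * pXgU u x' * pZgX x' z)) * (∑ u, pU u * pXgU u x')
        = ∑ u, pU u * pXgU u x' * pYgZU z u y := by
    intro x' z
    have hfac1 : (∑ u, pU u * pXgU u x' * pZgX x' z)
        = (∑ u, pU u * pXgU u x') * pZgX x' z := by
      rw [Finset.sum_mul]
    have hfac2 : (∑ u, pU u * pXgU u x' * pZgX x' z * pYgZU z u y)
        = pZgX x' z * ∑ u, pU u * pXgU u x' * pYgZU z u y := by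
      rw [Finset.mul_sum]
      exact Finset.sum_congr rfl fun u _ => by ring
    have hp := hpos x' z
    rw [hfac1] at hp
    have hS : (∑ u, pU u * pXgU u x') ≠ 0 := by
      intro h; rw [h, zero_mul] at hp; exact lt_irrefl 0 hp
    have hZ : pZgX x' z ≠ 0 := by
      intro h; rw [h, mul_zero] at hp; exact lt_irrefl 0 hp
    rw [hfac1, hfac2]
    field_simp
  rw [Finset.sum_congr rfl fun z _ => congrArg (pZgX x z * ·)
      (Finset.sum_congr rfl fun x' _ => key x' z)]
  have hswap : ∀ z : Z, (∑ x', ∑ u, pU u * pXgU u x' * pYgZU z u y)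
      = ∑ u, pU u * pYgZU z u y := by
    intro z
    rw [Finset.sum_comm]
    refine Finset.sum_congr rfl fun u _ => ?_
    rw [← Finset.sum_mul, ← Finset.mul_sum, hX1 u, mul_one]
  simp only [hswap, Finset.mul_sum]
  rw [Finset.sum_comm]
  exact Finset.sum_congr rfl fun z _ => Finset.sum_congr rfl fun u _ => by ring
end
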